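/- Let A ∈ ℂ^{N×N} be Hermitian positive semidefinite, let n be a natural number, and let τ ≥ 0 satisfy τ · ‖A‖₂ ≤ 1. Then for every natural number j, the j-th power of the matrix g_τ = Σ_{k=0}^{n} (1/k!) (−τ A)^k satisfies ‖g_τ^j‖₂ ≤ 1. -/

import Mathlib

/-!
By the continuous functional calculus, `g_τ ^ j = p (τ • A) ^ j` with
`p x = ∑_{k ≤ n} (-x)^k / k!`, and `τ • A` has spectrum in `[0, 1]`. For `x ∈ [0, 1]` the terms
`x^k / k!` of this alternating sum decrease, so every partial sum lies in `[0, 1]`. Hence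
`|p ^ j| ≤ 1` on the spectrum, and the C⋆-norm of `p (τ • A) ^ j` is at most `1`.
-/

open scoped Matrix ComplexOrder Matrix.Norms.L2Operator MatrixOrder
open Finset Nat

theorem Antitone.sum_range_neg_one_pow_mul_mem_Icc {E : Type*} [Ring E] [PartialOrder E]
    [IsOrderedRing E] {f : ℕ → E} (hf : Antitone f) (hf0 : ∀ i, 0 ≤ f i) (m : ℕ) :
    ∑ i ∈ range m, (-1) ^ i * f i ∈ Set.Icc 0 (f 0) := by
  induction m generalizing f with
  | zero => simpa using hf0 0
  | succ m ih =>
    obtain ⟨h0, h1⟩ := ih (f := fun i ↦ f (i + 1)) (fun _ _ h ↦ hf (by omega)) (fun i ↦ hf0 _)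
    have hshift : ∑ i ∈ range m, (-1) ^ (i + 1) * f (i + 1) =
        -∑ i ∈ range m, (-1) ^ i * f (i + 1) := by
      simp [pow_succ, ← sum_neg_distrib]
    rw [sum_range_succ', hshift, pow_zero, one_mul, neg_add_eq_sub, Set.mem_Icc,
      sub_nonneg, sub_le_self_iff]
    exact ⟨h1.trans (hf (Nat.zero_le 1)), h0⟩

theorem abs_sum_range_inv_factorial_mul_neg_pow_le_one {t : ℝ} (ht0 : 0 ≤ t) (ht1 : t ≤ 1)
    (m : ℕ) : |∑ i ∈ range m, (i ! : ℝ)⁻¹ * (-t) ^ i| ≤ 1 := by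
  have hanti : Antitone fun i : ℕ ↦ (i ! : ℝ)⁻¹ * t ^ i := by
    refine antitone_nat_of_succ_le fun i ↦ ?_
    calc ((i + 1)! : ℝ)⁻¹ * t ^ (i + 1) = (i + 1 : ℝ)⁻¹ * t * ((i ! : ℝ)⁻¹ * t ^ i) := by
          rw [factorial_succ, cast_mul, mul_inv, pow_succ]; push_cast; ring
      _ ≤ 1 * ((i ! : ℝ)⁻¹ * t ^ i) := by
          gcongr
          exact mul_le_one₀ (inv_le_one_of_one_le₀ (by simp)) ht0 ht1
      _ = (i ! : ℝ)⁻¹ * t ^ i := one_mul _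
  have hmem := hanti.sum_range_neg_one_pow_mul_mem_Icc (fun i ↦ by positivity) m
  simp only [neg_pow t, mul_left_comm _ ((-1 : ℝ) ^ _)]
  simp only [factorial_zero, cast_one, inv_one, pow_zero, mul_one] at hmem
  exact abs_le.mpr ⟨by linarith [hmem.1], hmem.2⟩

theorem norm_sum_range_inv_factorial_smul_neg_pow_pow_le_one {A : Type*} [CStarAlgebra A]
    [PartialOrder A] [StarOrderedRing A] {a : A} (ha : a ∈ Set.Icc 0 1) (m j : ℕ) :
    ‖(∑ k ∈ range m, (k ! : ℂ)⁻¹ • (-a) ^ k) ^ j‖ ≤ 1 := by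
  have hsa : IsSelfAdjoint a := ha.1.isSelfAdjoint
  have hcfc : ∑ k ∈ range m, (k ! : ℂ)⁻¹ • (-a) ^ k =
      cfc (fun x : ℝ ↦ ∑ k ∈ range m, (k ! : ℝ)⁻¹ * (-x) ^ k) a := by
    rw [← Finset.sum_fn, cfc_sum _ _ _ (fun _ _ ↦ by fun_prop)]
    refine sum_congr rfl fun k _ ↦ ?_
    rw [cfc_const_mul _ _ a, cfc_pow _ k a, cfc_neg_id a, ← Complex.coe_smul]
    push_cast
    rfl
  rw [hcfc, ← cfc_pow _ j a]
  refine norm_cfc_le zero_le_one fun x hx ↦ ?_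
  have hx0 : 0 ≤ x := spectrum_nonneg_of_nonneg ha.1 hx
  have hx1 : x ≤ 1 := (CFC.le_one_iff a).mp ha.2 x hx
  rw [norm_pow, Real.norm_eq_abs]
  exact pow_le_one₀ (abs_nonneg _) (abs_sum_range_inv_factorial_mul_neg_pow_le_one hx0 hx1 m)

/-- If `A` is Hermitian positive semidefinite and `0 ≤ τ` with `τ · ‖A‖₂ ≤ 1`, then every
power of the truncated exponential `g_τ = ∑_{k=0}^{n} (1/k!) (−τ A)^k` satisfies
`‖g_τ^j‖₂ ≤ 1` (ℓ²-operator norm). -/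
theorem truncated_exp_matrix_pow_norm_le_one {N : ℕ} (A : Matrix (Fin N) (Fin N) ℂ)
    (hA : A.PosSemidef) (n : ℕ) (τ : ℝ) (hτ : 0 ≤ τ) (hτA : τ * ‖A‖ ≤ 1) :
    ∀ j : ℕ,
      ‖(∑ k ∈ Finset.range (n + 1), ((Nat.factorial k : ℂ))⁻¹ • ((-(τ : ℂ)) • A) ^ k) ^ j‖
        ≤ 1 := by
  have hτA_nonneg : 0 ≤ (τ : ℂ) • A :=
    Matrix.nonneg_iff_posSemidef.mpr (hA.smul (by exact_mod_cast hτ))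
  have hτA_norm : ‖(τ : ℂ) • A‖ ≤ 1 := by
    rwa [norm_smul, Complex.norm_of_nonneg hτ]
  simpa only [neg_smul] using norm_sum_range_inv_factorial_smul_neg_pow_pow_le_one
    (CStarAlgebra.mem_Icc_iff_norm_le_one.mpr ⟨hτA_nonneg, hτA_norm⟩) (n + 1)
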